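/- arXiv:1608.01426 — 6 statements merged into one kernel-verified Lean document; each statement's English description precedes it below -/
import Mathlib

section
/- For any s > 0, any real λ with 0 < λ ≤ 2, and any positive integer K ≥ e²·s, the truncation error satisfies |e^{-sλ} - ∑_{k=0}^{K-1} P_s(k)(1-λ)^k| ≤ e^{-K}. -/
/-- The Poisson probability mass function with parameter `s`. -/
noncomputable def poissonPMF (s : ℝ) (k : ℕ) : ℝ := Real.exp (-s) * s ^ k / (Nat.factorial k)

lemma real_exp_tsum (x : ℝ) : Real.exp x = ∑' n : ℕ, x ^ n / n.factorial := by
  rw [Real.exp_eq_exp_ℝ, NormedSpace.exp_eq_tsum_div]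

lemma pow_div_factorial_le_exp (x : ℝ) (hx : 0 ≤ x) (k : ℕ) :
    x ^ k / k.factorial ≤ Real.exp x := by
  rw [real_exp_tsum]
  exact Summable.le_tsum (Real.summable_pow_div_factorial x) k
    (fun n _ => by positivity)

theorem poisson_truncation_error (s lam : ℝ) (K : ℕ) (hs : 0 < s)
    (hlam : 0 < lam) (hlam2 : lam ≤ 2) (hK : 0 < K)
    (hKs : Real.exp 2 * s ≤ K) :
    |Real.exp (-s * lam) - ∑ k ∈ Finset.range K, poissonPMF s k * (1 - lam) ^ k| ≤
      Real.exp (-(K : ℝ)) := by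
  set μ : ℝ := 1 - lam with hμ
  have hμabs : |μ| ≤ 1 := by rw [abs_le]; constructor <;> [linarith; linarith]
  set f : ℕ → ℝ := fun n => Real.exp (-s) * ((s * μ) ^ n / n.factorial) with hf
  have hsumf : Summable f := (Real.summable_pow_div_factorial (s * μ)).mul_left _
  have hexp : Real.exp (-s * lam) = ∑' n, f n := by
    have : -s * lam = -s + s * μ := by ring
    rw [this, Real.exp_add, real_exp_tsum (s * μ), ← tsum_mul_left]
  have hterm : ∀ k, poissonPMF s k * μ ^ k = f k := by
    intro k
    simp only [poissonPMF, hf, mul_pow]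
    ring
  have hsplit : (∑' n, f n) = (∑ k ∈ Finset.range K, f k) + ∑' n, f (n + K) :=
    (Summable.sum_add_tsum_nat_add K hsumf).symm
  have hsum_eq : ∑ k ∈ Finset.range K, poissonPMF s k * (1 - lam) ^ k
      = ∑ k ∈ Finset.range K, f k := Finset.sum_congr rfl (fun k _ => hterm k)
  rw [hexp, hsum_eq, hsplit, add_sub_cancel_left]
  -- now bound |∑' n, f (n + K)|
  have hsumtail : Summable (fun n => f (n + K)) := hsumf.comp_injective (add_left_injective K)
  set g : ℕ → ℝ := fun n => Real.exp (-s) * (s ^ K / K.factorial) * (s ^ n / n.factorial)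
    with hg
  have hsumg : Summable g := (Real.summable_pow_div_factorial s).mul_left _
  have hbound : ∀ n, |f (n + K)| ≤ g n := by
    intro n
    have h1 : |f (n + K)| = Real.exp (-s) * (s ^ (n + K) * |μ| ^ (n + K) / (n + K).factorial) := by
      rw [hf]
      rw [abs_mul, abs_of_pos (Real.exp_pos _), abs_div, abs_pow, abs_mul, mul_pow,
        abs_of_pos hs, Nat.abs_cast]
    rw [h1, hg]
    have hfac : (K.factorial : ℝ) * n.factorial ≤ (n + K).factorial := by
      have h := Nat.factorial_mul_factorial_dvd_factorial_add K n
      rw [add_comm K n] at h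
      exact_mod_cast Nat.le_of_dvd (Nat.factorial_pos _) h
    have hμp : |μ| ^ (n + K) ≤ 1 := pow_le_one₀ (abs_nonneg _) hμabs
    have h2 : s ^ (n + K) * |μ| ^ (n + K) ≤ s ^ (n + K) := by
      nlinarith [pow_pos hs (n + K), pow_nonneg (abs_nonneg μ) (n + K)]
    have h3 : s ^ (n + K) / (n + K).factorial ≤ s ^ K / K.factorial * (s ^ n / n.factorial) := by
      rw [div_le_iff₀ (by positivity), div_mul_div_comm, div_mul_eq_mul_div,
        le_div_iff₀ (by positivity), pow_add, mul_comm (s ^ n)]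
      have : (0:ℝ) ≤ s ^ K * s ^ n := by positivity
      calc s ^ K * s ^ n * ((K.factorial : ℝ) * n.factorial)
          ≤ s ^ K * s ^ n * (n + K).factorial := by
            exact mul_le_mul_of_nonneg_left hfac this
        _ = _ := by ring
    calc Real.exp (-s) * (s ^ (n + K) * |μ| ^ (n + K) / (n + K).factorial)
        ≤ Real.exp (-s) * (s ^ (n + K) / (n + K).factorial) := by
          apply mul_le_mul_of_nonneg_left _ (Real.exp_pos _).le
          exact div_le_div_of_nonneg_right h2 (by positivity) |>.trans_eq rfl
      _ ≤ Real.exp (-s) * (s ^ K / K.factorial * (s ^ n / n.factorial)) := by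
          exact mul_le_mul_of_nonneg_left h3 (Real.exp_pos _).le
      _ = g n := by rw [hg]; ring
  have habs : |∑' n, f (n + K)| ≤ ∑' n, g n := by
    calc |∑' n, f (n + K)| ≤ ∑' n, |f (n + K)| := by
          simpa [Real.norm_eq_abs] using norm_tsum_le_tsum_norm (f := fun n => f (n + K))
            (by simpa [Real.norm_eq_abs] using hsumtail.abs)
      _ ≤ ∑' n, g n := Summable.tsum_le_tsum hbound (hsumtail.abs) hsumg
  have hgsum : (∑' n, g n) = s ^ K / K.factorial := by
    rw [hg, tsum_mul_left, ← real_exp_tsum s, mul_right_comm, ← Real.exp_add,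
      neg_add_cancel, Real.exp_zero, one_mul]
  refine habs.trans ?_
  rw [hgsum]
  -- final estimate: s^K / K! ≤ exp(-K)
  have hKpos : (0:ℝ) < K := by exact_mod_cast hK
  have hse : s ≤ Real.exp (-2) * K := by
    rw [Real.exp_neg, inv_mul_eq_div, le_div_iff₀ (Real.exp_pos 2), mul_comm]
    exact hKs
  have h1 : s ^ K ≤ (Real.exp (-2) * K) ^ K :=
    pow_le_pow_left₀ hs.le hse K
  have h2 : (K:ℝ) ^ K / K.factorial ≤ Real.exp K :=
    pow_div_factorial_le_exp K hKpos.le K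
  calc s ^ K / K.factorial ≤ (Real.exp (-2) * K) ^ K / K.factorial := by
        apply div_le_div_of_nonneg_right h1 (by positivity) |>.trans_eq rfl
    _ = Real.exp (-2) ^ K * ((K:ℝ) ^ K / K.factorial) := by rw [mul_pow]; ring
    _ ≤ Real.exp (-2) ^ K * Real.exp K := by
        exact mul_le_mul_of_nonneg_left h2 (by positivity)
    _ = Real.exp (-(K:ℝ)) := by
        rw [← Real.exp_nat_mul, ← Real.exp_add]; ring_nf
end

section
/- Let G be a connected undirected weighted graph with normalized Laplacian L_G having eigenvalues 0 = λ₁ < λ₂ ≤ … ≤ λ_n ≤ 2 and orthonormal eigenvectors u₁,…,u_n, where u₁ = (√d₁,…,√d_n)/√vol(G). Let 𝔡 = max_i d_i / min_i d_i. Then there exist distinct indices i, j such that the unit vector v with v_i = -1/√(1+d_i/d_j), v_j = 1/√(1+d_j/d_i), and all other coordinates zero, satisfies v ⊥ u₁ and |⟨v, u₂⟩| ≥ 1/(√2·n·𝔡). -/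
lemma sum_ite_two_mul {n : ℕ} (i j : Fin n) (hij : i ≠ j) (A B : ℝ) (g : Fin n → ℝ) :
    ∑ ℓ, (if ℓ = i then A else if ℓ = j then B else 0) * g ℓ = A * g i + B * g j := by
  have h : ∀ ℓ : Fin n, (if ℓ = i then A else if ℓ = j then B else 0) * g ℓ
      = (if ℓ = i then A * g i else 0) + (if ℓ = j then B * g j else 0) := by
    intro ℓ
    by_cases h1 : ℓ = i
    · subst h1; simp [hij]
    · by_cases h2 : ℓ = j <;> simp [h1, h2, Ne.symm hij]
  simp [h, Finset.sum_add_distrib]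

lemma sum_ite_two_sq {n : ℕ} (i j : Fin n) (hij : i ≠ j) (A B : ℝ) :
    ∑ ℓ, (if ℓ = i then A else if ℓ = j then B else 0) ^ 2 = A ^ 2 + B ^ 2 := by
  have h : ∀ ℓ : Fin n, (if ℓ = i then A else if ℓ = j then B else 0) ^ 2
      = (if ℓ = i then A ^ 2 else 0) + (if ℓ = j then B ^ 2 else 0) := by
    intro ℓ
    by_cases h1 : ℓ = i
    · subst h1; simp [hij]
    · by_cases h2 : ℓ = j <;> simp [h1, h2, Ne.symm hij]
  simp [h, Finset.sum_add_distrib]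

lemma abs_sub_ge_of_mul_nonpos {x y : ℝ} (h : x * y ≤ 0) : |y| ≤ |x - y| := by
  rcases abs_cases y with ⟨e1, s1⟩ | ⟨e1, s1⟩ <;>
    rcases abs_cases (x - y) with ⟨e2, s2⟩ | ⟨e2, s2⟩ <;>
      rw [e1, e2] <;> nlinarith

set_option maxHeartbeats 1000000 in
/-- Existence of a good vector in Σ: for a connected weighted graph with normalized
Laplacian `L`, first eigenvector `u₁ = (√d₁,…,√d_n)/√vol(G)` and a unit eigenvector
`u₂ ⊥ u₁` for the eigenvalue `λ₂`, some vector of `Σ` is orthogonal to `u₁` and has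
overlap at least `1/(√2·n·𝔡)` with `u₂`. -/
theorem exists_good_vector {n : ℕ} (hn : 2 ≤ n)
    (w : Fin n → Fin n → ℝ)
    (hw_symm : ∀ i j, w i j = w j i) (hw_nonneg : ∀ i j, 0 ≤ w i j)
    (d : Fin n → ℝ) (hd_def : ∀ i, d i = ∑ j, w i j) (hd_pos : ∀ i, 0 < d i)
    (L : Matrix (Fin n) (Fin n) ℝ)
    (hL : L = 1 - (Matrix.diagonal fun i => (Real.sqrt (d i))⁻¹) *
      Matrix.of w * (Matrix.diagonal fun i => (Real.sqrt (d i))⁻¹))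
    (u₁ u₂ : Fin n → ℝ)
    (hu₁ : u₁ = fun i => Real.sqrt (d i) / Real.sqrt (∑ ℓ, d ℓ))
    (lam₂ : ℝ) (hlam₂pos : 0 < lam₂) (hlam₂le : lam₂ ≤ 2)
    (heig : L.mulVec u₂ = lam₂ • u₂)
    (hu₂_unit : ∑ ℓ, (u₂ ℓ) ^ 2 = 1)
    (hu₂_orth : ∑ ℓ, u₂ ℓ * u₁ ℓ = 0)
    (frak_d : ℝ) (hfrak : frak_d = (⨆ i, d i) / (⨅ i, d i)) :
    ∃ i j : Fin n, i ≠ j ∧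
      (let v : Fin n → ℝ := fun ℓ =>
        if ℓ = i then -(1 / Real.sqrt (1 + d i / d j))
        else if ℓ = j then 1 / Real.sqrt (1 + d j / d i) else 0
      (∑ ℓ, (v ℓ) ^ 2 = 1) ∧ (∑ ℓ, v ℓ * u₁ ℓ) = 0 ∧
        |∑ ℓ, v ℓ * u₂ ℓ| ≥ 1 / (Real.sqrt 2 * n * frak_d)) := by
  haveI : NeZero n := ⟨by omega⟩
  have hnpos : (0:ℝ) < n := by positivity
  -- volume
  set M : ℝ := ∑ ℓ, d ℓ with hM
  have hMpos : 0 < M := Finset.sum_pos (fun ℓ _ => hd_pos ℓ) ⟨0, Finset.mem_univ 0⟩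
  have hsM : (0:ℝ) < Real.sqrt M := Real.sqrt_pos.mpr hMpos
  -- orthogonality rephrased
  have horth : ∑ ℓ, u₂ ℓ * Real.sqrt (d ℓ) = 0 := by
    have h := hu₂_orth
    rw [hu₁] at h
    have h2 : ∑ ℓ, u₂ ℓ * (Real.sqrt (d ℓ) / Real.sqrt M)
        = (∑ ℓ, u₂ ℓ * Real.sqrt (d ℓ)) / Real.sqrt M := by
      rw [Finset.sum_div]
      exact Finset.sum_congr rfl fun ℓ _ => by ring
    rw [h2] at h
    exact (div_eq_zero_iff.mp h).resolve_right (ne_of_gt hsM)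
  -- index maximizing |u₂|
  obtain ⟨i, -, hi⟩ := Finset.exists_max_image Finset.univ (fun ℓ => |u₂ ℓ|)
    ⟨0, Finset.mem_univ 0⟩
  have hui : 1 / Real.sqrt n ≤ |u₂ i| := by
    have h1 : (1:ℝ) ≤ n * (u₂ i) ^ 2 := by
      calc (1:ℝ) = ∑ ℓ, (u₂ ℓ) ^ 2 := hu₂_unit.symm
        _ ≤ ∑ _ℓ : Fin n, (u₂ i) ^ 2 := by
            apply Finset.sum_le_sum
            intro ℓ _
            rw [← sq_abs (u₂ ℓ), ← sq_abs (u₂ i)]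
            exact pow_le_pow_left₀ (abs_nonneg _) (hi ℓ (Finset.mem_univ ℓ)) 2
        _ = n * (u₂ i) ^ 2 := by simp [mul_comm]
    have h2 : (1:ℝ) / n ≤ (u₂ i) ^ 2 := by
      rw [div_le_iff₀ hnpos]; linarith [h1]
    calc 1 / Real.sqrt n = Real.sqrt (1 / n) := by
          rw [one_div, one_div, Real.sqrt_inv]
      _ ≤ Real.sqrt ((u₂ i) ^ 2) := Real.sqrt_le_sqrt h2
      _ = |u₂ i| := Real.sqrt_sq_eq_abs _
  have hui0 : u₂ i ≠ 0 := by
    intro h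
    rw [h, abs_zero] at hui
    have : (0:ℝ) < 1 / Real.sqrt n := by positivity
    linarith
  -- index with opposite sign
  obtain ⟨j, hj⟩ : ∃ j, u₂ j * u₂ i < 0 := by
    by_contra h
    push_neg at h
    have h0 : (0:ℝ) < ∑ ℓ, Real.sqrt (d ℓ) * (u₂ ℓ * u₂ i) := by
      refine Finset.sum_pos' (fun ℓ _ => mul_nonneg (Real.sqrt_nonneg _) (h ℓ)) ?_
      exact ⟨i, Finset.mem_univ i,
        mul_pos (Real.sqrt_pos.mpr (hd_pos i)) (mul_self_pos.mpr hui0)⟩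
    have heq : ∑ ℓ, Real.sqrt (d ℓ) * (u₂ ℓ * u₂ i)
        = (∑ ℓ, u₂ ℓ * Real.sqrt (d ℓ)) * u₂ i := by
      rw [Finset.sum_mul]
      exact Finset.sum_congr rfl fun ℓ _ => by ring
    rw [heq, horth, zero_mul] at h0
    exact lt_irrefl 0 h0
  have hij : i ≠ j := by
    intro h
    rw [← h] at hj
    exact absurd hj (not_lt.mpr (mul_self_nonneg _))
  refine ⟨i, j, hij, ?_⟩
  have ha : 0 < d i := hd_pos i
  have hb : 0 < d j := hd_pos j
  have hab : 0 < d i + d j := by linarith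
  have hsab : 0 < Real.sqrt (d i + d j) := Real.sqrt_pos.mpr hab
  have hsa : 0 < Real.sqrt (d i) := Real.sqrt_pos.mpr ha
  have hsb : 0 < Real.sqrt (d j) := Real.sqrt_pos.mpr hb
  have hA : 1 / Real.sqrt (1 + d i / d j) = Real.sqrt (d j) / Real.sqrt (d i + d j) := by
    rw [show 1 + d i / d j = (d i + d j) / d j by field_simp; ring,
      Real.sqrt_div hab.le, one_div, inv_div]
  have hB : 1 / Real.sqrt (1 + d j / d i) = Real.sqrt (d i) / Real.sqrt (d i + d j) := by
    rw [show 1 + d j / d i = (d i + d j) / d i by field_simp,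
      Real.sqrt_div hab.le, one_div, inv_div]
  intro v
  have hv : v = fun ℓ => if ℓ = i then -(Real.sqrt (d j) / Real.sqrt (d i + d j))
      else if ℓ = j then Real.sqrt (d i) / Real.sqrt (d i + d j) else 0 := by
    funext ℓ; simp only [v, hA, hB]
  -- extremum values facts
  have hfin : (Set.range d).Finite := Set.finite_range d
  set dmin : ℝ := ⨅ ℓ, d ℓ with hdmin
  set dmax : ℝ := ⨆ ℓ, d ℓ with hdmax
  have hmin_le : ∀ ℓ, dmin ≤ d ℓ := fun ℓ => ciInf_le hfin.bddBelow ℓ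
  have hle_max : ∀ ℓ, d ℓ ≤ dmax := fun ℓ => le_ciSup hfin.bddAbove ℓ
  have hmin_pos : 0 < dmin := by
    have hmem : sInf (Set.range d) ∈ Set.range d :=
      (Set.range_nonempty d).csInf_mem hfin
    obtain ⟨ℓ₀, hℓ₀⟩ := hmem
    have : dmin = d ℓ₀ := by rw [hdmin, ← sInf_range, hℓ₀]
    rw [this]; exact hd_pos ℓ₀
  have hmax_pos : 0 < dmax := lt_of_lt_of_le hmin_pos ((hmin_le 0).trans (hle_max 0))
  have hfrak1 : 1 ≤ frak_d := by
    rw [hfrak]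
    exact (one_le_div hmin_pos).mpr ((hmin_le 0).trans (hle_max 0))
  have hfrakpos : 0 < frak_d := by linarith
  have hmax_eq : dmax = frak_d * dmin := by
    rw [hfrak]; field_simp
  -- the three properties
  refine ⟨?_, ?_, ?_⟩
  · rw [hv, sum_ite_two_sq i j hij]
    rw [neg_pow, div_pow, div_pow, Real.sq_sqrt hb.le, Real.sq_sqrt ha.le,
      Real.sq_sqrt hab.le]
    field_simp
    ring
  · rw [hv, sum_ite_two_mul i j hij, hu₁]
    simp only
    ring
  · rw [hv, sum_ite_two_mul i j hij]
    have hrw : -(Real.sqrt (d j) / Real.sqrt (d i + d j)) * u₂ i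
        + Real.sqrt (d i) / Real.sqrt (d i + d j) * u₂ j
        = (Real.sqrt (d i) * u₂ j - Real.sqrt (d j) * u₂ i) / Real.sqrt (d i + d j) := by
      ring
    rw [hrw, abs_div, abs_of_nonneg (Real.sqrt_nonneg _)]
    -- lower bound on numerator
    have hnum : Real.sqrt (d j) * |u₂ i|
        ≤ |Real.sqrt (d i) * u₂ j - Real.sqrt (d j) * u₂ i| := by
      have hxy : (Real.sqrt (d i) * u₂ j) * (Real.sqrt (d j) * u₂ i) ≤ 0 := by
        have h1 : 0 ≤ Real.sqrt (d i) * Real.sqrt (d j) :=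
          mul_nonneg hsa.le hsb.le
        nlinarith [hj]
      have := abs_sub_ge_of_mul_nonpos hxy
      rwa [abs_mul, abs_of_nonneg hsb.le] at this
    have hnum2 : Real.sqrt dmin * (1 / Real.sqrt n)
        ≤ Real.sqrt (d j) * |u₂ i| :=
      mul_le_mul (Real.sqrt_le_sqrt (hmin_le j)) hui (by positivity) hsb.le
    have hden : Real.sqrt (d i + d j) ≤ Real.sqrt (2 * dmax) := by
      apply Real.sqrt_le_sqrt
      have := hle_max i; have := hle_max j; linarith
    have hstep : Real.sqrt dmin * (1 / Real.sqrt n) / Real.sqrt (2 * dmax)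
        ≤ |Real.sqrt (d i) * u₂ j - Real.sqrt (d j) * u₂ i| / Real.sqrt (d i + d j) :=
      div_le_div₀ (le_trans (by positivity) hnum) (le_trans hnum2 hnum) hsab hden
    refine le_trans ?_ hstep
    -- final numeric comparison
    have hsd2 : Real.sqrt (2 * dmax)
        = Real.sqrt 2 * Real.sqrt frak_d * Real.sqrt dmin := by
      rw [hmax_eq, show (2:ℝ) * (frak_d * dmin) = 2 * frak_d * dmin by ring,
        Real.sqrt_mul (by positivity), Real.sqrt_mul (by norm_num)]
    have hs2 : (0:ℝ) < Real.sqrt 2 := by positivity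
    have hsn : (0:ℝ) < Real.sqrt n := Real.sqrt_pos.mpr hnpos
    have hsf : (0:ℝ) < Real.sqrt frak_d := Real.sqrt_pos.mpr hfrakpos
    have hsmin : (0:ℝ) < Real.sqrt dmin := Real.sqrt_pos.mpr hmin_pos
    have heq : Real.sqrt dmin * (1 / Real.sqrt n) / Real.sqrt (2 * dmax)
        = 1 / (Real.sqrt 2 * Real.sqrt n * Real.sqrt frak_d) := by
      rw [hsd2]
      field_simp [hs2.ne', hsn.ne', hsf.ne', hsmin.ne']
    rw [heq]
    apply one_div_le_one_div_of_le (by positivity)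
    have hsn_le : Real.sqrt n ≤ n := by
      nlinarith [Real.sq_sqrt hnpos.le, Real.sqrt_nonneg (n:ℝ), sq_nonneg (Real.sqrt n - 1),
        show (1:ℝ) ≤ n by exact_mod_cast Nat.one_le_of_lt hn]
    have hsf_le : Real.sqrt frak_d ≤ frak_d := by
      nlinarith [Real.sq_sqrt hfrakpos.le, sq_nonneg (Real.sqrt frak_d - 1)]
    calc Real.sqrt 2 * Real.sqrt n * Real.sqrt frak_d
        ≤ Real.sqrt 2 * n * Real.sqrt frak_d := by
          apply mul_le_mul_of_nonneg_right _ hsf.le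
          exact mul_le_mul_of_nonneg_left hsn_le hs2.le
      _ ≤ Real.sqrt 2 * n * frak_d := by
          apply mul_le_mul_of_nonneg_left hsf_le (by positivity)
end

section
/- Let M be a symmetric matrix with largest eigenvalue μ ∈ (0,1] and corresponding unit eigenvector u, all eigenvalues in [0,1], and let v be a unit vector with |⟨v,u⟩| ≥ α for some α ∈ (0,1]. Then for any integer k ≥ 0, ‖M^{k+1} v‖ / ‖M^k v‖ ≥ μ · α^{1/(k+1)}. -/
/-!
For symmetric `T`, `‖T^{j+1} v‖² = ⟪T^{j+2} v, T^j v⟫`, so by Cauchy–Schwarz the sequence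
`a_j = ‖T^j v‖` is log-convex; with `a_0 = ‖v‖ = 1` this gives `a_k^{k+1} ≤ a_{k+1}^k`.
Projecting onto the eigenvector gives `a_{k+1} ≥ μ^{k+1} α`, and the two bounds combine to
`(a_{k+1} / a_k)^{k+1} ≥ a_{k+1} ≥ (μ α^{1/(k+1)})^{k+1}`.
-/

open Matrix WithLp
open scoped InnerProductSpace

lemma pow_succ_le_pow_mul_zero_of_sq_le_mul {a : ℕ → ℝ} (ha : ∀ j, 0 ≤ a j)
    (h : ∀ j, a (j + 1) ^ 2 ≤ a (j + 2) * a j) (k : ℕ) :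
    a k ^ (k + 1) ≤ a (k + 1) ^ k * a 0 := by
  induction k with
  | zero => simp
  | succ j ih =>
    rcases (ha (j + 1)).eq_or_lt with h0 | hpos
    · rw [← h0, zero_pow (j + 1).succ_ne_zero]
      exact mul_nonneg (pow_nonneg (ha _) _) (ha 0)
    refine le_of_mul_le_mul_right ?_ (pow_pos hpos j)
    calc a (j + 1) ^ (j + 1 + 1) * a (j + 1) ^ j = (a (j + 1) ^ 2) ^ (j + 1) := by ring
      _ ≤ (a (j + 2) * a j) ^ (j + 1) := by gcongr; exact h j
      _ = a (j + 2) ^ (j + 1) * a j ^ (j + 1) := mul_pow ..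
      _ ≤ a (j + 2) ^ (j + 1) * (a (j + 1) ^ j * a 0) := by gcongr; exact pow_nonneg (ha _) _
      _ = a (j + 1 + 1) ^ (j + 1) * a 0 * a (j + 1) ^ j := by ring

lemma le_div_of_pow_succ_le {x y c : ℝ} {k : ℕ} (hx : 0 < x) (hc : 0 < c)
    (hxy : x ^ (k + 1) ≤ y ^ k) (hcy : c ^ (k + 1) ≤ y) : c ≤ y / x := by
  have hy : 0 < y := (pow_pos hc _).trans_le hcy
  rw [le_div_iff₀ hx]
  refine le_of_pow_le_pow_left₀ k.succ_ne_zero hy.le ?_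
  calc (c * x) ^ (k + 1) = c ^ (k + 1) * x ^ (k + 1) := mul_pow ..
    _ ≤ y * y ^ k := mul_le_mul hcy hxy (by positivity) hy.le
    _ = y ^ (k + 1) := (pow_succ' ..).symm

namespace LinearMap.IsSymmetric

variable {𝕜 E : Type*} [RCLike 𝕜] [NormedAddCommGroup E] [InnerProductSpace 𝕜 E]
  {T : E →ₗ[𝕜] E}

lemma norm_pow_succ_sq_le (hT : T.IsSymmetric) (v : E) (j : ℕ) :
    ‖(T ^ (j + 1)) v‖ ^ 2 ≤ ‖(T ^ (j + 2)) v‖ * ‖(T ^ j) v‖ := by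
  have hshift : ⟪(T ^ (j + 1)) v, (T ^ (j + 1)) v⟫_𝕜 = ⟪(T ^ (j + 2)) v, (T ^ j) v⟫_𝕜 := by
    have hsucc : ∀ i, (T ^ (i + 1)) v = T ((T ^ i) v) := fun i => by
      rw [pow_succ', Module.End.mul_apply]
    rw [show j + 2 = j + 1 + 1 from rfl, hsucc (j + 1), hT, ← hsucc j]
  calc ‖(T ^ (j + 1)) v‖ ^ 2 = ‖⟪(T ^ (j + 1)) v, (T ^ (j + 1)) v⟫_𝕜‖ := by
        rw [inner_self_eq_norm_sq_to_K, norm_pow, RCLike.norm_ofReal, abs_norm]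
    _ = ‖⟪(T ^ (j + 2)) v, (T ^ j) v⟫_𝕜‖ := by rw [hshift]
    _ ≤ ‖(T ^ (j + 2)) v‖ * ‖(T ^ j) v‖ := norm_inner_le_norm _ _

lemma norm_pow_mul_norm_inner_le (hT : T.IsSymmetric) {μ : 𝕜} {u : E} (hu : T u = μ • u)
    (v : E) (j : ℕ) : ‖μ‖ ^ j * ‖⟪u, v⟫_𝕜‖ ≤ ‖u‖ * ‖(T ^ j) v‖ := by
  have hpow : (T ^ j) u = μ ^ j • u := by
    induction j with
    | zero => simp
    | succ j ih => rw [pow_succ, Module.End.mul_apply, hu, map_smul, ih, smul_smul, pow_succ']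
  calc ‖μ‖ ^ j * ‖⟪u, v⟫_𝕜‖ = ‖⟪(T ^ j) u, v⟫_𝕜‖ := by
        rw [hpow, inner_smul_left, norm_mul, RCLike.norm_conj, norm_pow]
    _ = ‖⟪u, (T ^ j) v⟫_𝕜‖ := by rw [hT.pow j]
    _ ≤ ‖u‖ * ‖(T ^ j) v‖ := norm_inner_le_norm _ _

end LinearMap.IsSymmetric

theorem LinearMap.IsSymmetric.mul_rpow_le_norm_pow_succ_div {E : Type*} [NormedAddCommGroup E]
    [InnerProductSpace ℝ E] {T : E →ₗ[ℝ] E} (hT : T.IsSymmetric) {μ : ℝ} (hμ : 0 < μ) {u : E}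
    (hu_norm : ‖u‖ = 1) (hu : T u = μ • u) {v : E} (hv : ‖v‖ = 1) {α : ℝ} (hα : 0 < α)
    (hαuv : α ≤ |⟪u, v⟫_ℝ|) (k : ℕ) :
    μ * α ^ ((1 : ℝ) / (k + 1)) ≤ ‖(T ^ (k + 1)) v‖ / ‖(T ^ k) v‖ := by
  set a : ℕ → ℝ := fun j => ‖(T ^ j) v‖
  have hlower : ∀ j, μ ^ j * α ≤ a j := fun j => calc
    μ ^ j * α ≤ ‖μ‖ ^ j * ‖⟪u, v⟫_ℝ‖ := by
        rw [Real.norm_of_nonneg hμ.le, Real.norm_eq_abs]; gcongr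
    _ ≤ ‖u‖ * a j := hT.norm_pow_mul_norm_inner_le hu v j
    _ = a j := by rw [hu_norm, one_mul]
  have hconvex : a k ^ (k + 1) ≤ a (k + 1) ^ k * a 0 :=
    pow_succ_le_pow_mul_zero_of_sq_le_mul (a := a) (fun _ => norm_nonneg _)
      (hT.norm_pow_succ_sq_le v) k
  have ha0 : a 0 = 1 := by simp [a, hv]
  have hroot : (α ^ ((1 : ℝ) / (k + 1))) ^ (k + 1) = α := by
    rw [one_div, ← Nat.cast_succ]
    exact Real.rpow_inv_natCast_pow hα.le k.succ_ne_zero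
  refine le_div_of_pow_succ_le ((by positivity : 0 < μ ^ k * α).trans_le (hlower k))
    (by positivity) (by rwa [ha0, mul_one] at hconvex) ?_
  rw [mul_pow, hroot]
  exact hlower (k + 1)

theorem powerMethod_ratio_ge_general {n : ℕ} (M : Matrix (Fin n) (Fin n) ℝ)
    (hM : M.PosSemidef)
    (μ : ℝ) (hμ_pos : 0 < μ)
    (u : Fin n → ℝ) (hu_unit : ∑ ℓ, (u ℓ) ^ 2 = 1)
    (hu_eig : M.mulVec u = μ • u)
    (v : Fin n → ℝ) (hv_unit : ∑ ℓ, (v ℓ) ^ 2 = 1)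
    (α : ℝ) (hα_pos : 0 < α)
    (h_overlap : α ≤ |∑ ℓ, v ℓ * u ℓ|)
    (k : ℕ) :
    Real.sqrt (∑ i, ((M ^ (k + 1)).mulVec v i) ^ 2) /
      Real.sqrt (∑ i, ((M ^ k).mulVec v i) ^ 2) ≥
      μ * α ^ ((1 : ℝ) / (k + 1)) := by
  have hnorm : ∀ w : Fin n → ℝ, √(∑ i, w i ^ 2) = ‖toLp 2 w‖ := fun w => by
    simp [EuclideanSpace.norm_eq]
  have hpow : ∀ j, toLp 2 ((M ^ j) *ᵥ v) = (toEuclideanLin M ^ j) (toLp 2 v) := fun j => by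
    rw [← toLpLin_pow, toLpLin_toLp, toLin'_apply]
  rw [hnorm, hnorm, hpow, hpow]
  exact (isSymmetric_toEuclideanLin_iff.mpr hM.1).mul_rpow_le_norm_pow_succ_div hμ_pos
    (by rw [← hnorm, hu_unit, Real.sqrt_one]) (congrArg (toLp 2) hu_eig)
    (by rw [← hnorm, hv_unit, Real.sqrt_one]) hα_pos
    (by simpa [EuclideanSpace.inner_toLp_toLp, dotProduct, mul_comm] using h_overlap) k

/-- Power-method ratio lower bound: if `M` is symmetric PSD with eigenvalues in `[0,1]`,
largest eigenvalue `μ ∈ (0,1]` with unit eigenvector `u`, and `v` is a unit vector with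
`|⟨v,u⟩| ≥ α`, then `‖M^{k+1} v‖ / ‖M^k v‖ ≥ μ · α^{1/(k+1)}`. -/
theorem powerMethod_ratio_ge {n : ℕ} (M : Matrix (Fin n) (Fin n) ℝ)
    (hM : M.PosSemidef) (h_le_one : ∀ i, hM.1.eigenvalues i ≤ 1)
    (μ : ℝ) (hμ_pos : 0 < μ) (hμ_le : μ ≤ 1)
    (u : Fin n → ℝ) (hu_unit : ∑ ℓ, (u ℓ) ^ 2 = 1)
    (hu_eig : M.mulVec u = μ • u)
    (h_top : ∀ i, hM.1.eigenvalues i ≤ μ)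
    (v : Fin n → ℝ) (hv_unit : ∑ ℓ, (v ℓ) ^ 2 = 1)
    (α : ℝ) (hα_pos : 0 < α) (hα_le : α ≤ 1)
    (h_overlap : α ≤ |∑ ℓ, v ℓ * u ℓ|)
    (k : ℕ) :
    Real.sqrt (∑ i, ((M ^ (k + 1)).mulVec v i) ^ 2) /
      Real.sqrt (∑ i, ((M ^ k).mulVec v i) ^ 2) ≥
      μ * α ^ ((1 : ℝ) / (k + 1)) :=
  powerMethod_ratio_ge_general M hM μ hμ_pos u hu_unit hu_eig v hv_unit α hα_pos h_overlap k
end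

section
/- For any real a ≥ 1, (1 - 1/a)^a ≥ e^{-1} - 1/(2a). -/
/-! From `log y ≥ 1 - 1/y` one gets `(1 - 1/a)^(a-1) ≥ e⁻¹`; multiplying by `1 - 1/a` gives
`(1 - 1/a)^a ≥ e⁻¹ - e⁻¹/a`, and `e⁻¹ < 1/2` finishes. -/

open Real

theorem Real.exp_neg_one_le_one_sub_inv_rpow_sub_one {a : ℝ} (ha : 1 ≤ a) :
    exp (-1) ≤ (1 - 1 / a) ^ (a - 1) := by
  rcases ha.eq_or_lt with rfl | ha
  · norm_num
  have hbase : 0 < 1 - 1 / a := by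
    rw [sub_pos, div_lt_one (by linarith)]
    exact ha
  rw [rpow_def_of_pos hbase, exp_le_exp]
  calc -1 = (1 - (1 - 1 / a)⁻¹) * (a - 1) := by
        field_simp [show a - 1 ≠ 0 by linarith]
        ring
    _ ≤ log (1 - 1 / a) * (a - 1) :=
        mul_le_mul_of_nonneg_right (one_sub_inv_le_log_of_pos hbase) (by linarith)

/-- For any real `a ≥ 1`, `(1 - 1/a)^a ≥ e⁻¹ - 1/(2a)`. -/
theorem one_sub_inv_rpow_ge (a : ℝ) (ha : 1 ≤ a) :
    (1 - 1 / a) ^ a ≥ Real.exp (-1) - 1 / (2 * a) := by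
  have ha0 : 0 < a := by linarith
  have hbase : 0 ≤ 1 - 1 / a := by
    rw [sub_nonneg, div_le_one ha0]
    exact ha
  have hhalf : exp (-1) / a ≤ 1 / (2 * a) := by
    rw [show 1 / (2 * a) = 1 / 2 / a by ring]
    gcongr
    exact exp_neg_one_lt_half.le
  calc exp (-1) - 1 / (2 * a) ≤ exp (-1) * (1 - 1 / a) := by
        rw [mul_one_sub, mul_one_div]
        linarith
    _ ≤ (1 - 1 / a) ^ (a - 1) * (1 - 1 / a) :=
        mul_le_mul_of_nonneg_right (exp_neg_one_le_one_sub_inv_rpow_sub_one ha) hbase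
    _ = (1 - 1 / a) ^ a := by
        rw [← rpow_add_one' hbase (by linarith), sub_add_cancel]
end

section
/- Let λ ∈ (0,2], δ ∈ (0,1], and ζ ∈ (0, δλ/12]. Suppose r is a positive real with r ≤ 1 - λ/2, and C₁, C₂ are positive reals that are ζ-multiplicative approximations of positive numbers N₁, N₂ respectively (i.e., |C_i - N_i| ≤ ζ·N_i) with N₂/N₁ ≤ 1 - λ/2. Then 2(1 - C₂/C₁) ≥ (1 - δ)·λ. -/
/-- Scalar version of part (i) of the power-method proposition: if the true ratio
`N₂/N₁` is at most `1 - λ/2` and `C₁, C₂` are `ζ`-multiplicative approximations of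
`N₁, N₂` with `ζ ≤ δλ/12`, then `2(1 - C₂/C₁) ≥ (1 - δ)λ`. -/
theorem powerMethod_estimate_lb (lam delta zeta N₁ N₂ C₁ C₂ : ℝ)
    (hlam : 0 < lam) (hlam2 : lam ≤ 2)
    (hdelta : 0 < delta) (hdelta1 : delta ≤ 1)
    (hzeta : 0 < zeta) (hzeta2 : zeta ≤ delta * lam / 12)
    (hN₁ : 0 < N₁) (hN₂ : 0 < N₂) (hC₁ : 0 < C₁) (hC₂ : 0 < C₂)
    (happrox₁ : |C₁ - N₁| ≤ zeta * N₁) (happrox₂ : |C₂ - N₂| ≤ zeta * N₂)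
    (hratio : N₂ / N₁ ≤ 1 - lam / 2) :
    2 * (1 - C₂ / C₁) ≥ (1 - delta) * lam := by
  rw [abs_le] at happrox₁ happrox₂
  have h1 : (1 - zeta) * N₁ ≤ C₁ := by linarith [happrox₁.1]
  have h2 : C₂ ≤ (1 + zeta) * N₂ := by linarith [happrox₂.2]
  have hz6 : zeta ≤ 1/6 := by nlinarith
  have hr : N₂ ≤ (1 - lam/2) * N₁ := by
    rw [div_le_iff₀ hN₁] at hratio; linarith
  rw [ge_iff_le, ← sub_nonneg]
  have key : 2 * (1 - C₂ / C₁) - (1 - delta) * lam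
      = (2 * C₁ - 2 * C₂ - (1 - delta) * lam * C₁) / C₁ := by
    field_simp
  rw [key]
  apply div_nonneg _ hC₁.le
  nlinarith [mul_pos hzeta hN₁, mul_pos hdelta hlam, mul_pos (mul_pos hdelta hlam) hN₁, mul_pos hzeta (mul_pos hdelta hN₁)]
end

section
/- Let λ ∈ (0,2], δ ∈ (0,1], ζ ∈ (0, δλ/12], and α ∈ (0,1]. Suppose N₁, N₂ > 0 satisfy N₂/N₁ ≥ (1 - λ/2)·α^{1/(k+1)} for some integer k+1 ≥ 3·log(1/α)/(δλ), and C₁, C₂ are ζ-multiplicative approximations of N₁, N₂. Then 2(1 - C₂/C₁) ≤ (1 + δ)·λ. -/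
set_option maxHeartbeats 1000000 in
lemma pm_aux (a b c : ℝ) (ha : 0 ≤ a) (hb : 0 ≤ b) (hc : 0 ≤ c) (hc1 : c ≤ 1) :
    1 - (1 - a) * ((1 - b) * (1 - c)) ≤ a + b + c := by
  nlinarith [mul_nonneg (mul_nonneg ha hb) (sub_nonneg.mpr hc1), mul_nonneg ha hc,
    mul_nonneg hb hc]

/-- Scalar version of part (ii) of the power-method proposition: if the true ratio
`N₂/N₁` is at least `(1 - λ/2)·α^{1/(k+1)}` with `k+1 ≥ 3 log(1/α)/(δλ)`, and
`C₁, C₂` are `ζ`-multiplicative approximations of `N₁, N₂` with `ζ ≤ δλ/12`, then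
`2(1 - C₂/C₁) ≤ (1 + δ)λ`. -/
theorem powerMethod_estimate_ub (lam delta zeta alpha N₁ N₂ C₁ C₂ : ℝ) (k : ℕ)
    (hlam : 0 < lam) (hlam2 : lam ≤ 2)
    (hdelta : 0 < delta) (hdelta1 : delta ≤ 1)
    (hzeta : 0 < zeta) (hzeta2 : zeta ≤ delta * lam / 12)
    (halpha : 0 < alpha) (halpha1 : alpha ≤ 1)
    (hk : 3 * Real.log (1 / alpha) / (delta * lam) ≤ (k : ℝ) + 1)
    (hN₁ : 0 < N₁) (hN₂ : 0 < N₂) (hC₁ : 0 < C₁) (hC₂ : 0 < C₂)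
    (happrox₁ : |C₁ - N₁| ≤ zeta * N₁) (happrox₂ : |C₂ - N₂| ≤ zeta * N₂)
    (hratio : (1 - lam / 2) * alpha ^ ((1 : ℝ) / (k + 1)) ≤ N₂ / N₁) :
    2 * (1 - C₂ / C₁) ≤ (1 + delta) * lam := by
  have hdl : 0 < delta * lam := mul_pos hdelta hlam
  have hdl2 : delta * lam ≤ 2 := by nlinarith
  have hk1 : (0 : ℝ) < (k : ℝ) + 1 := by positivity
  -- α^{1/(k+1)} ≥ 1 - δλ/3
  have hlog : Real.log (1 / alpha) ≤ ((k : ℝ) + 1) * (delta * lam) / 3 := by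
    rw [div_le_iff₀ hdl] at hk
    linarith
  have hloga : -(delta * lam) / 3 ≤ Real.log alpha / ((k : ℝ) + 1) := by
    rw [Real.log_div one_ne_zero (ne_of_gt halpha), Real.log_one] at hlog
    rw [div_le_div_iff₀ (by norm_num) hk1]
    nlinarith
  have hpow : 1 - delta * lam / 3 ≤ alpha ^ ((1 : ℝ) / (k + 1)) := by
    have h1 : alpha ^ ((1 : ℝ) / (k + 1)) = Real.exp (Real.log alpha / ((k : ℝ) + 1)) := by
      rw [Real.rpow_def_of_pos halpha, mul_one_div]
    rw [h1]
    calc 1 - delta * lam / 3 ≤ Real.exp (-(delta * lam) / 3) := by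
          have := Real.add_one_le_exp (-(delta * lam) / 3)
          linarith
      _ ≤ Real.exp (Real.log alpha / ((k : ℝ) + 1)) := Real.exp_le_exp.mpr hloga
  -- bounds on C₁, C₂
  have h1 : C₁ ≤ (1 + zeta) * N₁ := by
    have := abs_le.mp happrox₁; linarith [this.2]
  have h2 : (1 - zeta) * N₂ ≤ C₂ := by
    have := abs_le.mp happrox₂; linarith [this.1]
  have hz1 : zeta ≤ 1 / 6 := by linarith
  -- C₂ / C₁ ≥ (1 - 2ζ)(1 - λ/2)(1 - δλ/3)
  have hN : (1 - lam / 2) * (1 - delta * lam / 3) * N₁ ≤ N₂ := by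
    have hpos : (0 : ℝ) ≤ 1 - lam / 2 := by linarith
    have h3 : (1 - lam / 2) * (1 - delta * lam / 3) ≤ (1 - lam / 2) * alpha ^ ((1:ℝ)/(k+1)) :=
      mul_le_mul_of_nonneg_left hpow hpos
    calc (1 - lam / 2) * (1 - delta * lam / 3) * N₁
        ≤ (1 - lam / 2) * alpha ^ ((1:ℝ)/(k+1)) * N₁ := by
          exact mul_le_mul_of_nonneg_right h3 hN₁.le
      _ ≤ N₂ / N₁ * N₁ := mul_le_mul_of_nonneg_right hratio hN₁.le
      _ = N₂ := by field_simp
  have e1 : (0:ℝ) ≤ 1 - 2 * zeta := by linarith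
  have e2 : (0:ℝ) ≤ 1 - lam / 2 := by linarith
  have e3 : (0:ℝ) ≤ 1 - delta * lam / 3 := by linarith
  have hkey : (1 - 2 * zeta) * ((1 - lam / 2) * (1 - delta * lam / 3)) ≤ C₂ / C₁ := by
    rw [le_div_iff₀ hC₁]
    have hq : (1 - 2 * zeta) * (1 + zeta) ≤ 1 - zeta := by nlinarith
    calc (1 - 2 * zeta) * ((1 - lam / 2) * (1 - delta * lam / 3)) * C₁
        ≤ (1 - 2 * zeta) * ((1 - lam / 2) * (1 - delta * lam / 3)) * ((1 + zeta) * N₁) := by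
          exact mul_le_mul_of_nonneg_left h1 (mul_nonneg e1 (mul_nonneg e2 e3))
      _ = ((1 - 2 * zeta) * (1 + zeta)) * ((1 - lam / 2) * (1 - delta * lam / 3) * N₁) := by ring
      _ ≤ (1 - zeta) * ((1 - lam / 2) * (1 - delta * lam / 3) * N₁) := by
          exact mul_le_mul_of_nonneg_right hq (mul_nonneg (mul_nonneg e2 e3) hN₁.le)
      _ ≤ (1 - zeta) * N₂ := by
          exact mul_le_mul_of_nonneg_left hN (by linarith)
      _ ≤ C₂ := h2
  have ha : (0:ℝ) ≤ 2 * zeta := by linarith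
  have hb : (0:ℝ) ≤ lam / 2 := by linarith
  have hc : (0:ℝ) ≤ delta * lam / 3 := by positivity
  have hP : 1 - (1 - 2 * zeta) * ((1 - lam / 2) * (1 - delta * lam / 3))
      ≤ 2 * zeta + lam / 2 + delta * lam / 3 :=
    pm_aux _ _ _ ha hb hc (by linarith)
  linarith
end
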